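/- arXiv:2006.12650 — 4 statements merged into one kernel-verified Lean document; each statement's English description precedes it below -/
import Mathlib

section
/- If X and Y are Poisson random variables with parameters λ and λ' respectively, then d_TV(X,Y) ≤ |λ − λ'|. -/
/-!
For `r ≤ r'` the Poisson weights satisfy `e^{-(r'-r)} Po(r){n} ≤ Po(r'){n}`, since
`e^{-(r'-r)} e^{-r} r^n = e^{-r'} r^n ≤ e^{-r'} r'^n`. Whenever `c • ν ≤ ν'` for probability
measures, comparing the masses of `s` and of `sᶜ` gives `|ν' s - ν s| ≤ 1 - c`; here
`1 - e^{-(r'-r)} ≤ r' - r`.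

`X` and `Y` are not assumed measurable, so `μ (X ⁻¹' s)` is only an outer measure; it is still
determined by the point masses, via countable subadditivity applied to `s` and to `sᶜ`.
-/

open MeasureTheory ProbabilityTheory
open scoped NNReal ENNReal

namespace MeasureTheory

variable {α : Type*} [MeasurableSpace α]

theorem Measure.le_of_forall_singleton_le [Countable α] [MeasurableSingletonClass α]
    {μ ν : Measure α} (h : ∀ a, μ {a} ≤ ν {a}) : μ ≤ ν := by
  intro s
  rw [← tsum_indicator_apply_singleton μ s (.of_discrete),
    ← tsum_indicator_apply_singleton ν s (.of_discrete)]
  exact ENNReal.tsum_le_tsum fun a => Set.indicator_le_indicator (h a)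

theorem abs_measureReal_sub_le_of_smul_le {ν ν' : Measure α} [IsProbabilityMeasure ν]
    [IsProbabilityMeasure ν'] {c : ℝ≥0∞} (h : c • ν ≤ ν') {s : Set α}
    (hs : MeasurableSet s) : |ν'.real s - ν.real s| ≤ 1 - c.toReal := by
  have hle (t : Set α) : c.toReal * ν.real t ≤ ν'.real t := by
    rw [← measureReal_ennreal_smul_apply]
    exact ENNReal.toReal_mono (measure_ne_top ν' t) (h t)
  have hs_le := hle s
  have hsc_le := hle sᶜ
  have hc_le_one := hle Set.univ
  rw [probReal_compl_eq_one_sub hs, probReal_compl_eq_one_sub hs] at hsc_le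
  simp only [probReal_univ, mul_one] at hc_le_one
  have hν_nonneg : 0 ≤ ν.real s := measureReal_nonneg
  have hν_le_one : ν.real s ≤ 1 := measureReal_le_one
  rw [abs_le]; constructor <;> nlinarith

variable {Ω : Type*} [MeasurableSpace Ω] [Countable α] [MeasurableSingletonClass α]

theorem measure_preimage_le_of_forall_singleton {μ : Measure Ω} {ν : Measure α} {X : Ω → α}
    (h : ∀ a, μ {ω | X ω = a} = ν {a}) (s : Set α) : μ (X ⁻¹' s) ≤ ν s := by
  calc μ (X ⁻¹' s) = μ (⋃ a ∈ s, X ⁻¹' {a}) := by rw [Set.biUnion_preimage_singleton]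
    _ ≤ ∑' a : s, μ (X ⁻¹' {(a : α)}) := measure_biUnion_le μ s.to_countable _
    _ = ∑' a, s.indicator (fun a => ν {a}) a := by
      rw [← tsum_subtype]; exact tsum_congr fun a => h a
    _ = ν s := Measure.tsum_indicator_apply_singleton ν s .of_discrete

theorem measure_preimage_eq_of_forall_singleton {μ : Measure Ω} [IsProbabilityMeasure μ]
    {ν : Measure α} [IsProbabilityMeasure ν] {X : Ω → α}
    (h : ∀ a, μ {ω | X ω = a} = ν {a}) (s : Set α) : μ (X ⁻¹' s) = ν s := by
  refine le_antisymm (measure_preimage_le_of_forall_singleton h s) ?_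
  calc ν s = 1 - ν sᶜ := by
        rw [prob_compl_eq_one_sub .of_discrete,
          ENNReal.sub_sub_cancel ENNReal.one_ne_top prob_le_one]
    _ ≤ 1 - μ (X ⁻¹' sᶜ) :=
        tsub_le_tsub_left (measure_preimage_le_of_forall_singleton h sᶜ) 1
    _ ≤ μ (X ⁻¹' s) := by
      rw [tsub_le_iff_left]
      calc 1 = μ (X ⁻¹' sᶜ ∪ X ⁻¹' s) := by
            rw [← Set.preimage_union, Set.compl_union_self, Set.preimage_univ, measure_univ]
        _ ≤ μ (X ⁻¹' sᶜ) + μ (X ⁻¹' s) := measure_union_le _ _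

end MeasureTheory

namespace ProbabilityTheory

open Real

theorem ofReal_exp_smul_poissonMeasure_le {r r' : ℝ≥0} (h : r ≤ r') :
    ENNReal.ofReal (exp (-(r' - r : ℝ))) • poissonMeasure r ≤ poissonMeasure r' := by
  refine Measure.le_of_forall_singleton_le fun n => ?_
  rw [Measure.smul_apply, poissonMeasure_singleton, poissonMeasure_singleton, smul_eq_mul,
    ← ENNReal.ofReal_mul (exp_pos _).le]
  refine ENNReal.ofReal_le_ofReal ?_
  calc exp (-(r' - r : ℝ)) * (exp (-r) * r ^ n / n.factorial)
      = exp (-r') * r ^ n / n.factorial := by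
        rw [← mul_div_assoc, ← mul_assoc, ← exp_add]; ring_nf
    _ ≤ exp (-r') * r' ^ n / n.factorial := by gcongr

theorem abs_poissonMeasure_real_sub_le (r r' : ℝ≥0) {s : Set ℕ} :
    |(poissonMeasure r).real s - (poissonMeasure r').real s| ≤ |(r : ℝ) - r'| := by
  wlog h : r ≤ r' generalizing r r'
  · rw [abs_sub_comm, abs_sub_comm (r : ℝ)]; exact this r' r (le_of_not_ge h)
  rw [abs_sub_comm, abs_sub_comm (r : ℝ),
    abs_of_nonneg (sub_nonneg.2 (NNReal.coe_le_coe.2 h))]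
  calc _ ≤ 1 - (ENNReal.ofReal (exp (-(r' - r : ℝ)))).toReal :=
        abs_measureReal_sub_le_of_smul_le (ofReal_exp_smul_poissonMeasure_le h) .of_discrete
    _ ≤ r' - r := by
      rw [ENNReal.toReal_ofReal (exp_pos _).le]; linarith [add_one_le_exp (-(r' - r : ℝ))]

end ProbabilityTheory

/-- If `X ~ Poisson(λ)` and `Y ~ Poisson(λ')`, then `d_TV(X,Y) ≤ |λ − λ'|`. -/
theorem dTV_poisson_le {Ω : Type*} [MeasurableSpace Ω] (μ : Measure Ω)
    [IsProbabilityMeasure μ] (X Y : Ω → ℕ) (l l' : ℝ) (hl : 0 ≤ l) (hl' : 0 ≤ l')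
    (hX : ∀ n : ℕ, μ {ω | X ω = n} = ENNReal.ofReal (Real.exp (-l) * l ^ n / n.factorial))
    (hY : ∀ n : ℕ, μ {ω | Y ω = n} = ENNReal.ofReal (Real.exp (-l') * l' ^ n / n.factorial)) :
    (⨆ A : Set ℕ, |(μ (X ⁻¹' A)).toReal - (μ (Y ⁻¹' A)).toReal|) ≤ |l - l'| := by
  lift l to ℝ≥0 using hl
  lift l' to ℝ≥0 using hl'
  have hXlaw (A : Set ℕ) : μ (X ⁻¹' A) = poissonMeasure l A :=
    measure_preimage_eq_of_forall_singleton
      (fun n => (hX n).trans (poissonMeasure_singleton l n).symm) A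
  have hYlaw (A : Set ℕ) : μ (Y ⁻¹' A) = poissonMeasure l' A :=
    measure_preimage_eq_of_forall_singleton
      (fun n => (hY n).trans (poissonMeasure_singleton l' n).symm) A
  refine ciSup_le fun A => ?_
  rw [hXlaw, hYlaw]
  exact abs_poissonMeasure_real_sub_le l l'
end

section
/- Let T be a finite set of primes and let m ≥ 0 be an integer. Then the sum of 1/h over all positive integers h whose prime factors all lie in T and which have exactly m distinct prime factors is at most H'(T)^m / m!, where H'(T) = Σ_{p∈T} 1/(p−1). -/
/-!
Write `G(T, m)` for the sum of `1 / h` over the `T`-factored `h` with `ω(h) = m`, and induct on `T`.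
When a prime `p ∉ T` is added, every `(insert p T)`-factored number is uniquely `p ^ e * n` with
`n` a `T`-factored number, and `ω(p ^ e * n) = ω(n) + 1` exactly when `e ≥ 1`. Summing the
geometric series in `e` gives the exact recursion
`G(insert p T, m + 1) = G(T, m + 1) + G(T, m) / (p - 1)`, and the bound `m! G(T, m) ≤ H'(T) ^ m`
propagates through it because `H ^ (m + 1) + (m + 1) H ^ m w ≤ (H + w) ^ (m + 1)`.
Working in `ℝ≥0∞` makes every series summable, so nothing has to be checked before reindexing.
-/

open scoped ENNReal Nat

theorem ENNReal.tsum_inv_pow_succ (x : ℝ≥0∞) : ∑' n : ℕ, x⁻¹ ^ (n + 1) = (x - 1)⁻¹ := by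
  rw [ENNReal.tsum_geometric_add_one]
  rcases eq_or_ne x 0 with rfl | hx0
  · simp
  rcases eq_or_ne x ∞ with rfl | hxt
  · simp
  rw [← ENNReal.mul_inv (.inl hx0) (.inl hxt), ENNReal.mul_sub (fun _ _ => hxt), mul_one,
    ENNReal.mul_inv_cancel hx0 hxt]

theorem pow_succ_add_mul_le {R : Type*} [CommSemiring R] [PartialOrder R] [IsOrderedRing R]
    {a b : R} (ha : 0 ≤ a) (hb : 0 ≤ b) (n : ℕ) :
    a ^ (n + 1) + (n + 1) * a ^ n * b ≤ (a + b) ^ (n + 1) := by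
  rw [add_pow, Finset.sum_range_succ, Finset.sum_range_succ, Nat.choose_self,
    Nat.choose_succ_self_right, Nat.sub_self, Nat.add_sub_cancel_left]
  have : 0 ≤ ∑ k ∈ Finset.range n, a ^ k * b ^ (n + 1 - k) * (n + 1).choose k :=
    Finset.sum_nonneg fun _ _ => by positivity
  push_cast
  calc a ^ (n + 1) + (n + 1) * a ^ n * b
      = 0 + a ^ n * b ^ 1 * (n + 1) + a ^ (n + 1) * b ^ 0 * 1 := by ring
    _ ≤ _ := by gcongr

namespace Nat

theorem primeFactors_prime_pow_succ_mul {p n : ℕ} (hp : p.Prime) (hn : n ≠ 0) (k : ℕ) :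
    (p ^ (k + 1) * n).primeFactors = insert p n.primeFactors := by
  rw [primeFactors_mul (pow_ne_zero _ hp.ne_zero) hn, primeFactors_prime_pow k.succ_ne_zero hp,
    Finset.insert_eq]

noncomputable def factoredRecipSum (T : Finset ℕ) (m : ℕ) : ℝ≥0∞ :=
  ∑' n : factoredNumbers T, {n : ℕ | n.primeFactors.card = m}.indicator (fun n => (n : ℝ≥0∞)⁻¹) n

variable {T : Finset ℕ}

theorem factoredRecipSum_zero : factoredRecipSum T 0 = 1 := by
  have h1 : 1 ∈ factoredNumbers T :=
    mem_factoredNumbers_of_primeFactors_subset one_ne_zero (by simp)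
  rw [factoredRecipSum, tsum_eq_single ⟨1, h1⟩]
  · simp
  rintro ⟨n, hn⟩ hn1
  have : n ≠ 1 := fun h => hn1 (Subtype.ext h)
  simp [hn.1, this]

theorem factoredRecipSum_empty_succ (m : ℕ) : factoredRecipSum ∅ (m + 1) = 0 := by
  refine ENNReal.tsum_eq_zero.mpr fun ⟨n, hn⟩ => ?_
  simp [Finset.subset_empty.mp (primeFactors_subset_of_mem_factoredNumbers hn)]

theorem factoredRecipSum_insert {p : ℕ} (hp : p.Prime) (hpT : p ∉ T) (m : ℕ) :
    factoredRecipSum (insert p T) (m + 1) =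
      factoredRecipSum T (m + 1) + ((p : ℝ≥0∞) - 1)⁻¹ * factoredRecipSum T m := by
  have hterm : ∀ (k : ℕ) (n : factoredNumbers T),
      {n : ℕ | n.primeFactors.card = m + 1}.indicator (fun n => (n : ℝ≥0∞)⁻¹) (p ^ (k + 1) * n) =
        (p : ℝ≥0∞)⁻¹ ^ (k + 1) *
          {n : ℕ | n.primeFactors.card = m}.indicator (fun n => (n : ℝ≥0∞)⁻¹) n := by
    rintro k ⟨n, hn⟩
    have hpn : p ∉ n.primeFactors := fun h => hpT (primeFactors_subset_of_mem_factoredNumbers hn h)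
    simp only [Set.indicator_apply, Set.mem_ofPred_eq, primeFactors_prime_pow_succ_mul hp hn.1,
      Finset.card_insert_of_notMem hpn, add_left_inj, mul_ite, mul_zero, cast_mul, cast_pow]
    rw [ENNReal.mul_inv (by simp [hp.ne_zero]) (by simp), ENNReal.inv_pow]
  rw [factoredRecipSum, ← (equivProdNatFactoredNumbers hp hpT).tsum_eq, ENNReal.tsum_prod',
    tsum_eq_zero_add' ENNReal.summable]
  simp only [equivProdNatFactoredNumbers_apply', pow_zero, one_mul, hterm, ENNReal.tsum_mul_left,
    ENNReal.tsum_mul_right, ENNReal.tsum_inv_pow_succ]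
  rfl

theorem factorial_mul_factoredRecipSum_le (hT : ∀ p ∈ T, p.Prime) (m : ℕ) :
    m ! * factoredRecipSum T m ≤ (∑ p ∈ T, ((p : ℝ≥0∞) - 1)⁻¹) ^ m := by
  induction T using Finset.induction_on generalizing m with
  | empty => cases m <;> simp [factoredRecipSum_zero, factoredRecipSum_empty_succ]
  | insert p T hpT ih =>
    have hT' : ∀ q ∈ T, q.Prime := fun q hq => hT q (Finset.mem_insert_of_mem hq)
    cases m with
    | zero => simp [factoredRecipSum_zero]
    | succ m =>
      set H := ∑ q ∈ T, ((q : ℝ≥0∞) - 1)⁻¹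
      calc ((m + 1)! : ℝ≥0∞) * factoredRecipSum (insert p T) (m + 1)
          = (m + 1)! * factoredRecipSum T (m + 1) +
              (m + 1) * ((p : ℝ≥0∞) - 1)⁻¹ * (m ! * factoredRecipSum T m) := by
            rw [factoredRecipSum_insert (hT p (Finset.mem_insert_self p T)) hpT, factorial_succ]
            push_cast
            ring
        _ ≤ H ^ (m + 1) + (m + 1) * H ^ m * ((p : ℝ≥0∞) - 1)⁻¹ := by
            grw [ih hT' (m + 1), ih hT' m]
            rw [mul_right_comm]
        _ ≤ (H + ((p : ℝ≥0∞) - 1)⁻¹) ^ (m + 1) :=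
            pow_succ_add_mul_le (by positivity) (by positivity) m
        _ = (∑ q ∈ insert p T, ((q : ℝ≥0∞) - 1)⁻¹) ^ (m + 1) := by
            rw [Finset.sum_insert hpT, add_comm]

theorem factoredRecipSum_le (hT : ∀ p ∈ T, p.Prime) (m : ℕ) :
    factoredRecipSum T m ≤ (∑ p ∈ T, ((p : ℝ≥0∞) - 1)⁻¹) ^ m / m ! := by
  rw [ENNReal.le_div_iff_mul_le (by simp [m.factorial_ne_zero]) (by simp), mul_comm]
  exact factorial_mul_factoredRecipSum_le hT m

theorem toReal_factoredRecipSum (m : ℕ) :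
    (factoredRecipSum T m).toReal =
      ∑' h : ℕ, (factoredNumbers T ∩ {h | h.primeFactors.card = m}).indicator
        (fun h => (1 : ℝ) / h) h := by
  rw [factoredRecipSum, tsum_subtype, ← Set.indicator_indicator, ENNReal.tsum_toReal_eq]
  · congr 1 with h
    simp only [Set.indicator_apply, Set.mem_ofPred_eq]
    split_ifs <;> simp
  · intro h
    simp only [Set.indicator_apply, Set.mem_ofPred_eq]
    split_ifs with hh
    · simp [hh.1]
    all_goals simp

end Nat

/-- The sum of `1/h` over positive integers `h` whose prime factors all lie in `T` and
with exactly `m` distinct prime factors is at most `H'(T)^m / m!`. -/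
theorem sum_recip_smooth_with_m_factors (T : Finset ℕ) (hT : ∀ p ∈ T, p.Prime) (m : ℕ) :
    (∑' h : ℕ,
        Set.indicator {h : ℕ | 1 ≤ h ∧ (∀ p : ℕ, p.Prime → p ∣ h → p ∈ T) ∧
          h.primeFactors.card = m} (fun h => (1 : ℝ) / h) h)
      ≤ (∑ p ∈ T, (1 : ℝ) / (p - 1)) ^ m / m.factorial := by
  have hset : {h : ℕ | 1 ≤ h ∧ (∀ p : ℕ, p.Prime → p ∣ h → p ∈ T) ∧ h.primeFactors.card = m} =
      Nat.factoredNumbers T ∩ {h | h.primeFactors.card = m} := by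
    ext h
    simp only [Set.mem_inter_iff, Set.mem_ofPred_eq, ← Nat.mem_factoredNumbers',
      Nat.one_le_iff_ne_zero]
    exact ⟨fun ⟨_, hh, hm⟩ => ⟨hh, hm⟩, fun ⟨hh, hm⟩ => ⟨hh.1, hh, hm⟩⟩
  have hp_sub_one : ∀ p ∈ T, 0 < (p : ℝ) - 1 := fun p hp => by
    simpa using (hT p hp).one_lt
  have hweight_nonneg : ∀ p ∈ T, 0 ≤ 1 / ((p : ℝ) - 1) := fun p hp =>
    (one_div_pos.mpr (hp_sub_one p hp)).le
  have hweight : ∀ p ∈ T, ENNReal.ofReal (1 / ((p : ℝ) - 1)) = ((p : ℝ≥0∞) - 1)⁻¹ := by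
    intro p hp
    rw [one_div, ENNReal.ofReal_inv_of_pos (hp_sub_one p hp), ENNReal.ofReal_sub _ zero_le_one]
    simp
  have hsum_nonneg := Finset.sum_nonneg hweight_nonneg
  rw [hset, ← Nat.toReal_factoredRecipSum]
  refine ENNReal.toReal_le_of_le_ofReal (by positivity) ((Nat.factoredRecipSum_le hT m).trans_eq ?_)
  rw [ENNReal.ofReal_div_of_pos (by positivity), ENNReal.ofReal_pow hsum_nonneg,
    ENNReal.ofReal_sum_of_nonneg hweight_nonneg, ENNReal.ofReal_natCast,
    Finset.sum_congr rfl hweight]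
end

section
/- Let T be a finite set of primes, and for each p ∈ T let X_p be independent with P(X_p = k) = p^{-k}(1 − 1/p). Let U_T = #{p ∈ T : X_p ≥ 1}. Then for complex z with |z| ≤ 2, E[z^{U_T}] = Π_{p∈T}(1 + (z−1)/p), and there is an absolute constant C such that |E[z^{U_T}] − e^{(z−1)H(T)}| ≤ C·|z−1|²·H''(T)·e^{(Re z − 1)H(T)} uniformly for |z| ≤ 2. -/
/-!
`U_T` is a sum of independent indicators of the events `X_p ≥ 1`, which have probability `1/p`,
so `E[z^{U_T}]` factors as `∏ (1 + (z - 1)/p)`. With `u_p = (z - 1)/p`, both `1 + u_p` and `e^{u_p}`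
have modulus at most `exp (Re u_p + |u_p|²/2)` and differ by at most `|u_p|² e^{|u_p|}`; telescoping
the difference of the two products bounds it by `∑ |u_p|²` times the product of these moduli, which
is `exp ((Re z - 1) H(T))` up to an absolute factor because `|u_p| ≤ 3/2` and `H''(T) ≤ 1`.
-/

open MeasureTheory ProbabilityTheory Finset

theorem Complex.norm_one_add_le_exp (u : ℂ) : ‖1 + u‖ ≤ Real.exp (u.re + ‖u‖ ^ 2 / 2) := by
  have hsq : ‖1 + u‖ ^ 2 = 1 + 2 * u.re + ‖u‖ ^ 2 := by
    simp only [← Complex.normSq_eq_norm_sq, Complex.normSq_apply, Complex.add_re,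
      Complex.add_im, Complex.one_re, Complex.one_im]
    ring
  have hexp : Real.exp (u.re + ‖u‖ ^ 2 / 2) ^ 2 = Real.exp (2 * u.re + ‖u‖ ^ 2) := by
    rw [← Real.exp_nat_mul]; ring_nf
  refine le_of_pow_le_pow_left₀ two_ne_zero (Real.exp_pos _).le ?_
  rw [hsq, hexp]
  linarith [Real.add_one_le_exp (2 * u.re + ‖u‖ ^ 2)]

theorem Complex.norm_exp_sub_one_sub_le (u : ℂ) : ‖exp u - 1 - u‖ ≤ ‖u‖ ^ 2 * Real.exp ‖u‖ := by
  simpa [sum_range_succ, sub_sub] using norm_exp_sub_sum_le_norm_mul_exp u 2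

theorem norm_prod_sub_prod_le {ι R : Type*} [DecidableEq ι] [NormedCommRing R] [NormOneClass R]
    (s : Finset ι) (f g : ι → R) (A : ι → ℝ)
    (hf : ∀ i ∈ s, ‖f i‖ ≤ A i) (hg : ∀ i ∈ s, ‖g i‖ ≤ A i) :
    ‖∏ i ∈ s, f i - ∏ i ∈ s, g i‖ ≤ ∑ i ∈ s, ‖f i - g i‖ * ∏ j ∈ s.erase i, A j := by
  induction s using Finset.induction_on with
  | empty => simp
  | @insert a s ha ih =>
    have hf' : ∀ i ∈ s, ‖f i‖ ≤ A i := fun i hi => hf i (mem_insert_of_mem hi)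
    have hg' : ∀ i ∈ s, ‖g i‖ ≤ A i := fun i hi => hg i (mem_insert_of_mem hi)
    have hga : ‖g a‖ ≤ A a := hg a (mem_insert_self a s)
    have hprod_f : ‖∏ i ∈ s, f i‖ ≤ ∏ i ∈ s, A i :=
      (Finset.norm_prod_le _ _).trans (prod_le_prod (fun i _ => norm_nonneg _) hf')
    have herase : ∀ i ∈ s, ∏ j ∈ (insert a s).erase i, A j = A a * ∏ j ∈ s.erase i, A j :=
      fun i hi => by
        rw [erase_insert_of_ne (ne_of_mem_of_not_mem hi ha).symm,
          prod_insert fun h => ha (mem_of_mem_erase h)]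
    calc ‖∏ i ∈ insert a s, f i - ∏ i ∈ insert a s, g i‖
        = ‖(f a - g a) * ∏ i ∈ s, f i + g a * (∏ i ∈ s, f i - ∏ i ∈ s, g i)‖ := by
          rw [prod_insert ha, prod_insert ha]; ring_nf
      _ ≤ ‖f a - g a‖ * ∏ i ∈ s, A i
            + A a * ∑ i ∈ s, ‖f i - g i‖ * ∏ j ∈ s.erase i, A j := by
          refine (norm_add_le _ _).trans (add_le_add ?_ ?_) <;> refine (norm_mul_le _ _).trans ?_
          · gcongr
          · exact mul_le_mul hga (ih hf' hg') (norm_nonneg _) ((norm_nonneg _).trans hga)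
      _ = ∑ i ∈ insert a s, ‖f i - g i‖ * ∏ j ∈ (insert a s).erase i, A j := by
          rw [sum_insert ha, erase_insert ha, mul_sum]
          congr 1
          refine sum_congr rfl fun i hi => ?_
          rw [herase i hi, mul_left_comm]

theorem Complex.norm_prod_one_add_sub_exp_sum_le {ι : Type*} (s : Finset ι) (u : ι → ℂ) {R : ℝ}
    (hu : ∀ i ∈ s, ‖u i‖ ≤ R) :
    ‖∏ i ∈ s, (1 + u i) - exp (∑ i ∈ s, u i)‖ ≤
      (∑ i ∈ s, ‖u i‖ ^ 2) * Real.exp (2 * R + ∑ i ∈ s, (u i).re + (∑ i ∈ s, ‖u i‖ ^ 2) / 2) := by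
  classical
  set S := ∑ i ∈ s, ((u i).re + ‖u i‖ ^ 2 / 2)
  have hprod_erase : ∀ i ∈ s, ∏ j ∈ s.erase i, Real.exp ((u j).re + ‖u j‖ ^ 2 / 2)
      ≤ Real.exp (R + S) := by
    intro i hi
    rw [← Real.exp_sum, Real.exp_le_exp]
    have hS : S = ∑ j ∈ s.erase i, ((u j).re + ‖u j‖ ^ 2 / 2) + ((u i).re + ‖u i‖ ^ 2 / 2) :=
      (sum_erase_add _ _ hi).symm
    have : -(u i).re ≤ R := (neg_le_abs _).trans ((abs_re_le_norm _).trans (hu i hi))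
    nlinarith [sq_nonneg ‖u i‖]
  have hdiff : ∀ i ∈ s, ‖(1 + u i) - exp (u i)‖ ≤ ‖u i‖ ^ 2 * Real.exp R := fun i hi => by
    rw [← norm_neg, show -(1 + u i - exp (u i)) = exp (u i) - 1 - u i by ring]
    exact (norm_exp_sub_one_sub_le _).trans (by gcongr; exact hu i hi)
  rw [exp_sum]
  calc ‖∏ i ∈ s, (1 + u i) - ∏ i ∈ s, exp (u i)‖
      ≤ ∑ i ∈ s, ‖(1 + u i) - exp (u i)‖ * ∏ j ∈ s.erase i, Real.exp ((u j).re + ‖u j‖ ^ 2 / 2) :=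
        norm_prod_sub_prod_le s _ _ _ (fun i _ => norm_one_add_le_exp _)
          (fun i _ => by rw [norm_exp]; gcongr; exact le_add_of_nonneg_right (by positivity))
    _ ≤ ∑ i ∈ s, ‖u i‖ ^ 2 * Real.exp R * Real.exp (R + S) :=
        sum_le_sum fun i hi => mul_le_mul (hdiff i hi) (hprod_erase i hi)
          (prod_nonneg fun _ _ => (Real.exp_pos _).le) (by positivity)
    _ = _ := by
        rw [← sum_mul, ← sum_mul, mul_assoc, ← Real.exp_add]
        simp only [S, sum_add_distrib, sum_div]
        ring_nf

theorem sum_one_div_sq_le_one (T : Finset ℕ) (hT : ∀ p ∈ T, 2 ≤ p) :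
    ∑ p ∈ T, (1 : ℝ) / p ^ 2 ≤ 1 := by
  obtain ⟨N, hN⟩ := T.exists_nat_subset_range
  have hsub : T ⊆ Ioo 1 N := fun p hp => mem_Ioo.2 ⟨hT p hp, mem_range.1 (hN hp)⟩
  calc ∑ p ∈ T, (1 : ℝ) / p ^ 2 ≤ ∑ p ∈ Ioo 1 N, ((p : ℝ) ^ 2)⁻¹ := by
        simp only [one_div]
        exact sum_le_sum_of_subset_of_nonneg hsub fun _ _ _ => by positivity
    _ ≤ 1 := (sum_Ioo_inv_sq_le 1 N).trans_eq (by norm_num)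

theorem norm_prod_one_add_div_sub_exp_le (T : Finset ℕ) (hT : ∀ p ∈ T, 2 ≤ p) {w : ℂ}
    (hw : ‖w‖ ≤ 3) :
    ‖∏ p ∈ T, (1 + w / (p : ℂ)) - Complex.exp (w * (∑ p ∈ T, (1 : ℝ) / p))‖
      ≤ Real.exp (15 / 2) * ‖w‖ ^ 2 * (∑ p ∈ T, (1 : ℝ) / p ^ 2) *
          Real.exp (w.re * ∑ p ∈ T, (1 : ℝ) / p) := by
  set H := ∑ p ∈ T, (1 : ℝ) / p
  set H₂ := ∑ p ∈ T, (1 : ℝ) / p ^ 2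
  have hp2 : ∀ p ∈ T, (2 : ℝ) ≤ p := fun p hp => by exact_mod_cast hT p hp
  have hu : ∀ p ∈ T, ‖w / (p : ℂ)‖ ≤ 3 / 2 := fun p hp => by
    rw [norm_div, Complex.norm_natCast, div_le_iff₀ (by linarith [hp2 p hp])]
    nlinarith [hp2 p hp]
  have hsum : ∑ p ∈ T, w / (p : ℂ) = w * (H : ℂ) := by
    simp only [H, Complex.ofReal_sum, mul_sum]
    push_cast
    ring_nf
  have hsum_re : ∑ p ∈ T, (w / (p : ℂ)).re = w.re * H := by
    simp only [H, Complex.div_natCast_re, mul_sum]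
    ring_nf
  have hsum_sq : ∑ p ∈ T, ‖w / (p : ℂ)‖ ^ 2 = ‖w‖ ^ 2 * H₂ := by
    simp only [H₂, norm_div, Complex.norm_natCast, mul_sum]
    ring_nf
  have hH₂_nonneg : 0 ≤ H₂ := sum_nonneg fun _ _ => by positivity
  have hH₂ : ‖w‖ ^ 2 * H₂ ≤ 9 := by
    have := sum_one_div_sq_le_one T hT
    nlinarith [norm_nonneg w]
  calc ‖∏ p ∈ T, (1 + w / (p : ℂ)) - Complex.exp (w * H)‖
      = ‖∏ p ∈ T, (1 + w / (p : ℂ)) - Complex.exp (∑ p ∈ T, w / (p : ℂ))‖ := by rw [hsum]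
    _ ≤ ‖w‖ ^ 2 * H₂ * Real.exp (2 * (3 / 2) + w.re * H + ‖w‖ ^ 2 * H₂ / 2) := by
        simpa only [hsum_re, hsum_sq] using Complex.norm_prod_one_add_sub_exp_sum_le T _ hu
    _ ≤ ‖w‖ ^ 2 * H₂ * Real.exp (15 / 2 + w.re * H) :=
        mul_le_mul_of_nonneg_left (Real.exp_le_exp.2 (by linarith)) (by positivity)
    _ = Real.exp (15 / 2) * ‖w‖ ^ 2 * H₂ * Real.exp (w.re * H) := by
        rw [Real.exp_add]
        ring

theorem integral_ite_mem {Ω E : Type*} [MeasurableSpace Ω] {μ : Measure Ω} [IsProbabilityMeasure μ]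
    [NormedAddCommGroup E] [NormedSpace ℝ E] [CompleteSpace E] {s : Set Ω} [DecidablePred (· ∈ s)]
    (hs : MeasurableSet s) (a b : E) :
    ∫ ω, (if ω ∈ s then a else b) ∂μ = b + μ.real s • (a - b) := by
  have hsplit :
      (fun ω => if ω ∈ s then a else b) = fun ω => b + s.indicator (fun _ => a - b) ω := by
    ext ω
    by_cases h : ω ∈ s <;> simp [h]
  rw [hsplit, integral_add (integrable_const b) ((integrable_const _).indicator hs),
    integral_indicator_const _ hs, integral_const, probReal_univ, one_smul]

theorem measureReal_one_le_eq {Ω : Type*} [MeasurableSpace Ω] {μ : Measure Ω}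
    [IsProbabilityMeasure μ] {X : Ω → ℕ} (hX : Measurable X) {q : ℝ} (hq : q ≤ 1)
    (h : μ {ω | X ω = 0} = ENNReal.ofReal (1 - q)) :
    μ.real {ω | 1 ≤ X ω} = q := by
  have hcompl : {ω | 1 ≤ X ω} = {ω | X ω = 0}ᶜ := by ext; simp [Nat.one_le_iff_ne_zero]
  rw [hcompl, probReal_compl_eq_one_sub (measurableSet_eq_fun hX measurable_const),
    measureReal_def, h, ENNReal.toReal_ofReal (by linarith)]
  ring

theorem integral_pow_card_filter_one_le {Ω ι : Type*} [MeasurableSpace Ω] {μ : Measure Ω}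
    {X : ι → Ω → ℕ} (hX : ∀ i, Measurable (X i)) (hind : iIndepFun X μ) (T : Finset ι) (z : ℂ) :
    ∫ ω, z ^ #(T.filter fun i => 1 ≤ X i ω) ∂μ
      = ∏ i ∈ T, (1 + μ.real {ω | 1 ≤ X i ω} * (z - 1)) := by
  have := hind.isProbabilityMeasure
  set f : ℕ → ℂ := fun n => if 1 ≤ n then z else 1
  have hprod : ∀ ω, z ^ #(T.filter fun i => 1 ≤ X i ω) = ∏ i : T, f (X i ω) := fun ω => by
    rw [prod_coe_sort T fun i => f (X i ω), prod_ite, prod_const, prod_const_one, mul_one]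
  calc ∫ ω, z ^ #(T.filter fun i => 1 ≤ X i ω) ∂μ
      = ∫ ω, ∏ i : T, f (X i ω) ∂μ := by simp_rw [hprod]
    _ = ∏ i : T, ∫ ω, f (X i ω) ∂μ :=
        (hind.precomp Subtype.val_injective).integral_fun_prod_comp
          (fun i => (hX i).aemeasurable) fun _ => Measurable.of_discrete.aestronglyMeasurable
    _ = ∏ i ∈ T, (1 + μ.real {ω | 1 ≤ X i ω} * (z - 1)) := by
        rw [prod_coe_sort T fun i => ∫ ω, f (X i ω) ∂μ]
        refine prod_congr rfl fun i _ => ?_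
        refine (integral_ite_mem (measurableSet_le measurable_const (hX i)) z 1).trans ?_
        rw [Complex.real_smul]

/-- For `U_T = #{p ∈ T : X_p ≥ 1}` with the `X_p` independent geometric-type variables,
and `|z| ≤ 2`: `E[z^{U_T}] = ∏_{p∈T}(1 + (z−1)/p)`, and there is an absolute constant `C`
with `|E[z^{U_T}] − e^{(z−1)H(T)}| ≤ C |z−1|² H''(T) e^{(Re z − 1)H(T)}`. -/
theorem U_generating_function :
    ∃ C : ℝ, 0 < C ∧
      ∀ (Ω : Type) (_ : MeasurableSpace Ω) (μ : Measure Ω), IsProbabilityMeasure μ →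
      ∀ T : Finset ℕ, (∀ p ∈ T, p.Prime) →
      ∀ X : ℕ → Ω → ℕ, (∀ p, Measurable (X p)) →
      iIndepFun X μ →
      (∀ p ∈ T, ∀ k : ℕ,
        μ {ω | X p ω = k} = ENNReal.ofReal ((1 / (p : ℝ) ^ k) * (1 - 1 / p))) →
      ∀ z : ℂ, ‖z‖ ≤ 2 →
        (∫ ω, z ^ (T.filter (fun p => 1 ≤ X p ω)).card ∂μ
            = ∏ p ∈ T, (1 + (z - 1) / (p : ℂ))) ∧
        ‖(∫ ω, z ^ (T.filter (fun p => 1 ≤ X p ω)).card ∂μ)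
            - Complex.exp ((z - 1) * (∑ p ∈ T, (1 : ℝ) / p))‖
          ≤ C * ‖z - 1‖ ^ 2 * (∑ p ∈ T, (1 : ℝ) / p ^ 2) *
              Real.exp ((z.re - 1) * ∑ p ∈ T, (1 : ℝ) / p) := by
  refine ⟨Real.exp (15 / 2), Real.exp_pos _, ?_⟩
  intro Ω _ μ _ T hT X hX hind hdist z hz
  have hpgf : ∫ ω, z ^ (T.filter (fun p => 1 ≤ X p ω)).card ∂μ
      = ∏ p ∈ T, (1 + (z - 1) / (p : ℂ)) := by
    rw [integral_pow_card_filter_one_le hX hind]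
    refine prod_congr rfl fun p hp => ?_
    have hp_inv : (1 : ℝ) / p ≤ 1 :=
      div_le_one_of_le₀ (by exact_mod_cast (hT p hp).one_lt.le) p.cast_nonneg
    rw [measureReal_one_le_eq (hX p) hp_inv (by rw [hdist p hp 0, pow_zero, div_one, one_mul])]
    push_cast
    ring
  refine ⟨hpgf, ?_⟩
  have hw : ‖z - 1‖ ≤ 3 := (norm_sub_le _ _).trans (by rw [norm_one]; linarith)
  simpa only [hpgf, Complex.sub_re, Complex.one_re] using
    norm_prod_one_add_div_sub_exp_le T (fun p hp => (hT p hp).two_le) hw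
end

section
/- Let λ > 0 and H'' ≥ 0. Then Σ_{1 ≤ k ≤ 1.9λ} H''·e^{−λ}·(λ^k/k!)·(1/(k+1) + ((k−λ)/λ)²) ≤ C·H''/λ for an absolute constant C. -/
/-!
Both parts of the sum are dominated by complete series with nonnegative terms, so the range
`k ≤ 1.9λ` plays no role. Since `λᵏ/(k!(k+1)) = λᵏ⁺¹/((k+1)! λ)`, the first part is at most
`e^λ/λ`. The second part is the truncated Poisson variance `∑ (k-λ)² λᵏ/k! = λ e^λ` divided by
`λ²`; its partial sums telescope to `λ ∑_{k≤n} λᵏ/k! - (n+1-λ) λⁿ⁺¹/n!`, which is at most `λ e^λ`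
once `n + 1 ≥ λ`. Multiplying by `H'' e^{-λ}` gives the bound with `C = 2`.
-/

open Finset Nat Real

lemma sum_pow_div_factorial_le_exp {x : ℝ} (hx : 0 ≤ x) (s : Finset ℕ) :
    ∑ k ∈ s, x ^ k / k ! ≤ exp x := by
  rw [exp_eq_exp_ℝ]
  exact sum_le_hasSum s (fun _ _ => by positivity) (NormedSpace.expSeries_div_hasSum_exp x)

lemma sum_pow_div_factorial_div_succ_le {x : ℝ} (hx : 0 < x) (s : Finset ℕ) :
    ∑ k ∈ s, x ^ k / k ! / (k + 1) ≤ exp x / x := by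
  calc ∑ k ∈ s, x ^ k / k ! / (k + 1)
      = (∑ k ∈ s.map (addRightEmbedding 1), x ^ k / k !) / x := by
        rw [sum_map, sum_div]
        refine sum_congr rfl fun k _ => ?_
        simp only [addRightEmbedding_apply, factorial_succ, pow_succ]
        push_cast
        field_simp
    _ ≤ exp x / x := by gcongr; exact sum_pow_div_factorial_le_exp hx.le _

lemma sum_range_sq_sub_mul_pow_div_factorial (x : ℝ) (n : ℕ) :
    ∑ k ∈ range (n + 1), (k - x) ^ 2 * (x ^ k / k !) =
      x * (∑ k ∈ range (n + 1), x ^ k / k !) - (n + 1 - x) * (x ^ (n + 1) / n !) := by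
  induction n with
  | zero => simp only [zero_add, range_one, sum_singleton]; norm_num; ring
  | succ n ih =>
    rw [sum_range_succ, ih, sum_range_succ (fun k => x ^ k / (k ! : ℝ)) (n + 1),
      factorial_succ n]
    push_cast
    field_simp
    ring

lemma sum_sq_sub_mul_pow_div_factorial_le {x : ℝ} (hx : 0 ≤ x) (s : Finset ℕ) :
    ∑ k ∈ s, (k - x) ^ 2 * (x ^ k / k !) ≤ x * exp x := by
  set n := max (s.sup id) ⌈x⌉₊
  have hs : s ⊆ range (n + 1) := fun k hk =>
    mem_range.2 (Nat.lt_succ_of_le ((le_sup (f := id) hk).trans (le_max_left _ _)))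
  have hn : x ≤ n + 1 := by
    have := (Nat.le_ceil x).trans (Nat.cast_le.2 (le_max_right (s.sup id) ⌈x⌉₊))
    linarith
  calc ∑ k ∈ s, (k - x) ^ 2 * (x ^ k / k !)
      ≤ ∑ k ∈ range (n + 1), (k - x) ^ 2 * (x ^ k / k !) :=
        sum_le_sum_of_subset_of_nonneg hs fun _ _ _ => by positivity
    _ ≤ x * ∑ k ∈ range (n + 1), x ^ k / k ! := by
        rw [sum_range_sq_sub_mul_pow_div_factorial]
        have : 0 ≤ (n + 1 - x) * (x ^ (n + 1) / n !) := mul_nonneg (by linarith) (by positivity)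
        linarith
    _ ≤ x * exp x := by gcongr; exact sum_pow_div_factorial_le_exp hx _

/-- Key summation bound: there is an absolute constant `C` such that for all `λ > 0` and
`H'' ≥ 0`, `Σ_{1 ≤ k ≤ 1.9λ} H'' e^{−λ} (λ^k/k!) (1/(k+1) + ((k−λ)/λ)²) ≤ C H''/λ`. -/
theorem poisson_local_error_sum : ∃ C : ℝ, 0 < C ∧
    ∀ lam H2 : ℝ, 0 < lam → 0 ≤ H2 →
      (∑ k ∈ Finset.Icc 1 ⌊1.9 * lam⌋₊,
          H2 * Real.exp (-lam) * (lam ^ k / k.factorial) *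
            (1 / ((k : ℝ) + 1) + (((k : ℝ) - lam) / lam) ^ 2))
        ≤ C * H2 / lam := by
  refine ⟨2, two_pos, fun lam H2 hlam hH2 => ?_⟩
  set s := Icc 1 ⌊1.9 * lam⌋₊
  have hsplit : ∑ k ∈ s, H2 * exp (-lam) * (lam ^ k / k !) *
        (1 / ((k : ℝ) + 1) + ((k - lam) / lam) ^ 2) =
      H2 * exp (-lam) * (∑ k ∈ s, lam ^ k / k ! / (k + 1) +
        (∑ k ∈ s, (k - lam) ^ 2 * (lam ^ k / k !)) / lam ^ 2) := by
    rw [sum_div, ← sum_add_distrib, mul_sum]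
    refine sum_congr rfl fun k _ => ?_
    field_simp
  rw [hsplit]
  calc H2 * exp (-lam) * (∑ k ∈ s, lam ^ k / k ! / (k + 1) +
        (∑ k ∈ s, (k - lam) ^ 2 * (lam ^ k / k !)) / lam ^ 2)
      ≤ H2 * exp (-lam) * (exp lam / lam + lam * exp lam / lam ^ 2) := by
        gcongr
        · exact sum_pow_div_factorial_div_succ_le hlam s
        · exact sum_sq_sub_mul_pow_div_factorial_le hlam.le s
    _ = 2 * H2 / lam := by
        rw [exp_neg]
        field_simp
        ring
end
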